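/- arXiv:0809.0941 — 2 statements merged into one kernel-verified Lean document; each statement's English description precedes it below -/
import Mathlib

section
/- Let W : [0,∞) → ℝ be a nonnegative C¹ function with W(t) ≤ K₀ for all t, and suppose there are constants λ > 0 and K₁ ≥ 2 such that W'(t) ≤ -2λ W(t) + λ √(W(t) · W(t-2)) for all t ≥ K₁. Then there exist constants C and κ > 0 (depending only on K₀, K₁, λ) such that W(t) ≤ C e^{-κ t} for all t ≥ 0. -/
/-!
By AM–GM, `√(W t * W (t - 2)) ≤ (W t + W (t - 2)) / 2`, so a bound `M` for `W` on `[b, ∞)` gives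
`W' ≤ -(3λ/2) W + λ M / 2` on `[b + 2, ∞)`. Grönwall then pushes `W` below `M / 3 + (2/3) M e^{-3λs/2}`
a time `s` after `b + 2`, which is at most `M / 2` once `s ≥ log 4 / (3λ/2)`. Iterating this halving with
period `L = 2 + log 4 / (3λ/2)` from `b = K₁ - 2` gives decay at rate `log 2 / L`.
-/

open Real Set

lemma Real.sqrt_mul_le_half_add {x y : ℝ} (h : 0 ≤ x + y) : √(x * y) ≤ (x + y) / 2 := by
  rw [Real.sqrt_le_left (by linarith)]
  nlinarith [four_mul_le_sq_add x y]

lemma le_mul_exp_add_of_deriv_le_neg_mul_add {f : ℝ → ℝ} {μ ε a b : ℝ} (hμ : μ ≠ 0)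
    (hf : Differentiable ℝ f) (hab : a ≤ b) (bound : ∀ x ∈ Ico a b, deriv f x ≤ -μ * f x + ε) :
    f b ≤ f a * exp (-μ * (b - a)) + ε / μ * (1 - exp (-μ * (b - a))) := by
  have h := le_gronwallBound_of_liminf_deriv_right_le hf.continuous.continuousOn
    (fun x _ r hr => by
      simpa [slope_def_module] using (hf x).hasDerivAt.hasDerivWithinAt.liminf_right_slope_le hr)
    le_rfl bound b ⟨hab, le_rfl⟩
  rw [gronwallBound_of_K_ne_0 (neg_ne_zero.mpr hμ)] at h
  convert h using 1
  field_simp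
  ring

section Halving

variable {f : ℝ → ℝ} {a L M : ℝ}

lemma le_div_two_pow_of_halving (hL : 0 ≤ L) (hM : ∀ t ≥ a, f t ≤ M)
    (hhalf : ∀ b ≥ a, ∀ M', (∀ t ≥ b, f t ≤ M') → ∀ t ≥ b + L, f t ≤ M' / 2) :
    ∀ n : ℕ, ∀ t ≥ a + n * L, f t ≤ M / 2 ^ n := by
  intro n
  induction n with
  | zero => simpa using hM
  | succ n ih =>
    intro t ht
    rw [pow_succ, ← div_div]
    push_cast at ht
    exact hhalf _ (le_add_of_nonneg_right (by positivity)) _ ih t (by linarith)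

lemma inv_two_pow_floor_div_le (s L : ℝ) :
    ((2 : ℝ) ^ ⌊s / L⌋₊)⁻¹ ≤ 2 * exp (-(log 2 / L) * s) := by
  have hexp : exp (-(log 2 / L) * s) = (2 : ℝ) ^ (-(s / L)) := by
    rw [rpow_def_of_pos two_pos]
    ring_nf
  have h := rpow_le_rpow_of_exponent_le one_le_two
    (neg_le_neg (Nat.lt_floor_add_one (s / L)).le)
  rw [rpow_neg zero_le_two, rpow_add two_pos, rpow_natCast, rpow_one, mul_inv] at h
  rw [hexp]
  linarith

lemma le_two_mul_exp_of_halving (hL : 0 < L) (hM₀ : 0 ≤ M) (hM : ∀ t ≥ a, f t ≤ M)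
    (hhalf : ∀ b ≥ a, ∀ M', (∀ t ≥ b, f t ≤ M') → ∀ t ≥ b + L, f t ≤ M' / 2) :
    ∀ t ≥ a, f t ≤ 2 * M * exp (-(log 2 / L) * (t - a)) := by
  intro t ht
  have hn : a + ⌊(t - a) / L⌋₊ * L ≤ t := by
    have := Nat.floor_le (div_nonneg (sub_nonneg.2 ht) hL.le)
    rw [le_div_iff₀ hL] at this
    linarith
  calc f t ≤ M / 2 ^ ⌊(t - a) / L⌋₊ := le_div_two_pow_of_halving hL.le hM hhalf _ t hn
    _ = M * ((2 : ℝ) ^ ⌊(t - a) / L⌋₊)⁻¹ := div_eq_mul_inv _ _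
    _ ≤ M * (2 * exp (-(log 2 / L) * (t - a))) :=
        mul_le_mul_of_nonneg_left (inv_two_pow_floor_div_le _ _) hM₀
    _ = 2 * M * exp (-(log 2 / L) * (t - a)) := by ring

end Halving

section DelayInequality

variable {W : ℝ → ℝ} {K₁ lam : ℝ}

lemma deriv_le_of_delay_ineq (hK₁ : 2 ≤ K₁) (hW0 : ∀ t ≥ (0:ℝ), 0 ≤ W t)
    (hineq : ∀ t ≥ K₁, deriv W t ≤ -2 * lam * W t + lam * √(W t * W (t - 2)))
    (hlam : 0 < lam) {x M : ℝ} (hx : K₁ ≤ x) (hM : W (x - 2) ≤ M) :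
    deriv W x ≤ -(3 * lam / 2) * W x + lam * M / 2 := by
  have hsum : 0 ≤ W x + W (x - 2) := add_nonneg (hW0 _ (by linarith)) (hW0 _ (by linarith))
  calc deriv W x ≤ -2 * lam * W x + lam * √(W x * W (x - 2)) := hineq x hx
    _ ≤ -2 * lam * W x + lam * ((W x + W (x - 2)) / 2) := by
        gcongr
        exact sqrt_mul_le_half_add hsum
    _ ≤ -(3 * lam / 2) * W x + lam * M / 2 := by nlinarith

lemma le_half_of_delay_ineq (hK₁ : 2 ≤ K₁) (hW : Differentiable ℝ W)
    (hW0 : ∀ t ≥ (0:ℝ), 0 ≤ W t)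
    (hineq : ∀ t ≥ K₁, deriv W t ≤ -2 * lam * W t + lam * √(W t * W (t - 2)))
    (hlam : 0 < lam) {b M : ℝ} (hb : K₁ - 2 ≤ b) (hM : ∀ t ≥ b, W t ≤ M) :
    ∀ t ≥ b + (2 + log 4 / (3 * lam / 2)), W t ≤ M / 2 := by
  intro t ht
  set μ := 3 * lam / 2
  have hμ : 0 < μ := by positivity
  have hT : 0 ≤ log 4 / μ := div_nonneg (log_nonneg (by norm_num)) hμ.le
  have hM₀ : 0 ≤ M := (hW0 b (by linarith)).trans (hM b le_rfl)
  set e := exp (-μ * (t - (b + 2)))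
  have he : e ≤ 1 / 4 := by
    have : log 4 ≤ μ * (t - (b + 2)) := by
      rw [← div_le_iff₀' hμ]
      linarith
    calc e ≤ exp (-log 4) := exp_le_exp.2 (by linarith)
      _ = 1 / 4 := by rw [exp_neg, exp_log (by norm_num), one_div]
  have hgron := le_mul_exp_add_of_deriv_le_neg_mul_add hμ.ne' hW (by linarith : b + 2 ≤ t)
    fun x hx => deriv_le_of_delay_ineq hK₁ hW0 hineq hlam (by linarith [hx.1])
      (hM _ (by linarith [hx.1]))
  rw [show lam * M / 2 / μ = M / 3 by field_simp; ring] at hgron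
  have hstart : W (b + 2) * e ≤ M * e :=
    mul_le_mul_of_nonneg_right (hM _ (by linarith)) (exp_pos _).le
  linarith [mul_le_mul_of_nonneg_left he hM₀]

end DelayInequality

theorem decay_lemma_N1
    (W : ℝ → ℝ) (K₀ K₁ lam : ℝ)
    (hlam : 0 < lam) (hK₁ : 2 ≤ K₁)
    (hW : ContDiff ℝ 1 W)
    (hW0 : ∀ t ≥ (0:ℝ), 0 ≤ W t)
    (hWK : ∀ t ≥ (0:ℝ), W t ≤ K₀)
    (hineq : ∀ t ≥ K₁, deriv W t ≤ -2 * lam * W t + lam * Real.sqrt (W t * W (t - 2))) :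
    ∃ C κ : ℝ, 0 < κ ∧ ∀ t ≥ (0:ℝ), W t ≤ C * Real.exp (-κ * t) := by
  have hK₀ : 0 ≤ K₀ := (hW0 0 le_rfl).trans (hWK 0 le_rfl)
  set L := 2 + log 4 / (3 * lam / 2)
  have hL : 0 < L :=
    add_pos_of_pos_of_nonneg two_pos (div_nonneg (log_nonneg (by norm_num)) (by positivity))
  set κ := log 2 / L
  have hκ : 0 < κ := div_pos (log_pos one_lt_two) hL
  have hdecay := le_two_mul_exp_of_halving hL hK₀ (fun t ht => hWK t (by linarith))
    fun b hb _ hM => le_half_of_delay_ineq hK₁ (hW.differentiable one_ne_zero) hW0 hineq hlam hb hM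
  refine ⟨2 * K₀ * exp (κ * (K₁ - 2)), κ, hκ, fun t ht => ?_⟩
  rw [mul_assoc, ← exp_add, show κ * (K₁ - 2) + -κ * t = -κ * (t - (K₁ - 2)) by ring]
  rcases le_total (K₁ - 2) t with hlate | hearly
  · exact hdecay t hlate
  · have : 1 ≤ exp (-κ * (t - (K₁ - 2))) :=
      one_le_exp (mul_nonneg_of_nonpos_of_nonpos (neg_nonpos.2 hκ.le) (sub_nonpos.2 hearly))
    nlinarith [hWK t ht]
end

section
/- Let W : [0,∞) → ℝ be a nonnegative C¹ function with W(t) ≤ K₀, and suppose that for constants λ > 0, N ∈ ℕ, ν₀,…,ν_N ≥ 0 with (1/2)∑_{j=0}^N ν_j = 1 and K₁ ≥ 2N, we have W'(t) ≤ -2λ W(t) + λ ∏_{j=0}^N W(t-2j)^{ν_j/2} for all t ≥ K₁. Then there exist constants C and κ > 0, depending only on K₀, K₁, λ, N and the ν_j, such that W(t) ≤ C e^{-κ t} for all t ≥ 0. -/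
/-!
Once `W ≤ B` on `[T, ∞)`, every delayed value entering the product at times `x ≥ T + K₁` is at
most `B`, so by weighted AM-GM the product is at most `B` and `W' ≤ -2λW + λB` there. Comparison
with the linear ODE (Grönwall) then halves the excess over `B / 2` within time `log 2 / (2λ)`,
giving `W ≤ 3B/4` from `T + K₁ + log 2 / (2λ)` on. Iterating, `W ≤ K₀ (3/4)^k` on
`[k L, ∞)` with `L = K₁ + log 2 / (2λ)`, which is exponential decay at rate `log (4/3) / L`.
-/

open Real Finset

theorem exists_exp_decay_of_geometric {f : ℝ → ℝ} {C L q : ℝ} (hC : 0 ≤ C) (hL : 0 < L)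
    (hq₀ : 0 < q) (hq₁ : q < 1) (h : ∀ k : ℕ, ∀ t ≥ k * L, f t ≤ C * q ^ k) :
    ∃ C' κ : ℝ, 0 < κ ∧ ∀ t ≥ (0:ℝ), f t ≤ C' * exp (-κ * t) := by
  refine ⟨C / q, -log q / L, div_pos (neg_pos.2 (log_neg hq₀ hq₁)) hL, fun t ht => ?_⟩
  set k := ⌊t / L⌋₊
  have hkt : k * L ≤ t := (le_div_iff₀ hL).1 (Nat.floor_le (div_nonneg ht hL.le))
  have htk : t / L - 1 ≤ k := by linarith [Nat.lt_floor_add_one (t / L)]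
  calc f t ≤ C * q ^ k := h k t hkt
    _ = C * q ^ (k : ℝ) := by rw [rpow_natCast]
    _ ≤ C * q ^ (t / L - 1) :=
      mul_le_mul_of_nonneg_left (rpow_le_rpow_of_exponent_ge hq₀ hq₁.le htk) hC
    _ = C / q * exp (-(-log q / L) * t) := by
      rw [rpow_sub hq₀, rpow_one, rpow_def_of_pos hq₀]
      field_simp

theorem prod_rpow_le_of_le {ι : Type*} {s : Finset ι} {w z : ι → ℝ} {B : ℝ}
    (hw : ∀ i ∈ s, 0 ≤ w i) (hw₁ : ∑ i ∈ s, w i = 1) (hz : ∀ i ∈ s, 0 ≤ z i)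
    (hzB : ∀ i ∈ s, z i ≤ B) : ∏ i ∈ s, z i ^ w i ≤ B :=
  calc ∏ i ∈ s, z i ^ w i ≤ ∑ i ∈ s, w i * z i := geom_mean_le_arith_mean_weighted s w z hw hw₁ hz
    _ ≤ ∑ i ∈ s, w i * B := sum_le_sum fun i hi => mul_le_mul_of_nonneg_left (hzB i hi) (hw i hi)
    _ = B := by rw [← sum_mul, hw₁, one_mul]

theorem le_gronwallBound_of_deriv_le {f : ℝ → ℝ} {δ K ε t₀ : ℝ} (hf : Differentiable ℝ f)
    (h₀ : f t₀ ≤ δ) (bound : ∀ x ≥ t₀, deriv f x ≤ K * f x + ε) :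
    ∀ t ≥ t₀, f t ≤ gronwallBound δ K ε (t - t₀) := fun t ht =>
  le_gronwallBound_of_liminf_deriv_right_le (hf.continuous.continuousOn)
    (fun x _ _ hr => (hf x).hasDerivAt.hasDerivWithinAt.liminf_right_slope_le hr) h₀
    (fun x hx => bound x hx.1) t ⟨ht, le_rfl⟩

theorem le_three_quarters_of_deriv_le {f : ℝ → ℝ} {lam B t₀ : ℝ} (hf : Differentiable ℝ f)
    (hlam : 0 < lam) (hB : 0 ≤ B) (h₀ : f t₀ ≤ B)
    (bound : ∀ x ≥ t₀, deriv f x ≤ -2 * lam * f x + lam * B) :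
    ∀ t ≥ t₀ + log 2 / (2 * lam), f t ≤ 3 / 4 * B := by
  intro t ht
  have hlog : log 2 ≤ 2 * lam * (t - t₀) :=
    (div_le_iff₀' (by positivity)).1 (by linarith)
  have hexp : exp (-2 * lam * (t - t₀)) ≤ 1 / 2 := by
    calc exp (-2 * lam * (t - t₀)) ≤ exp (-log 2) := exp_le_exp.2 (by linarith)
      _ = 1 / 2 := by rw [exp_neg, exp_log two_pos, one_div]
  calc f t ≤ gronwallBound B (-2 * lam) (lam * B) (t - t₀) :=
        le_gronwallBound_of_deriv_le hf h₀ bound t (by nlinarith [log_nonneg one_le_two])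
    _ = B / 2 * (1 + exp (-2 * lam * (t - t₀))) := by
      rw [gronwallBound_of_K_ne_0 (by linarith)]
      field_simp
      ring
    _ ≤ 3 / 4 * B := by nlinarith

section DelayInequality

variable {ι : Type*} {s : Finset ι} {W : ℝ → ℝ} {K₁ lam : ℝ} {d w : ι → ℝ}

theorem le_three_quarters_of_delay_ineq (hW : Differentiable ℝ W) (hlam : 0 < lam) (hK₁ : 0 ≤ K₁)
    (hw : ∀ j ∈ s, 0 ≤ w j) (hw₁ : ∑ j ∈ s, w j = 1) (hd : ∀ j ∈ s, d j ≤ K₁)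
    (hW₀ : ∀ t ≥ (0:ℝ), 0 ≤ W t)
    (hineq : ∀ t ≥ K₁, deriv W t ≤ -2 * lam * W t + lam * ∏ j ∈ s, W (t - d j) ^ w j)
    {T B : ℝ} (hT : 0 ≤ T) (hB : ∀ t ≥ T, W t ≤ B) :
    ∀ t ≥ T + K₁ + log 2 / (2 * lam), W t ≤ 3 / 4 * B := by
  have hdelayed : ∀ x ≥ T + K₁, ∀ j ∈ s, T ≤ x - d j := fun x hx j hj => by
    linarith [hd j hj]
  apply le_three_quarters_of_deriv_le hW hlam ((hW₀ T hT).trans (hB T le_rfl))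
    (hB _ (by linarith))
  intro x hx
  have hprod : ∏ j ∈ s, W (x - d j) ^ w j ≤ B :=
    prod_rpow_le_of_le hw hw₁ (fun j hj => hW₀ _ (hT.trans (hdelayed x hx j hj)))
      (fun j hj => hB _ (hdelayed x hx j hj))
  linarith [hineq x (by linarith), mul_le_mul_of_nonneg_left hprod hlam.le]

theorem le_geometric_of_delay_ineq (hW : Differentiable ℝ W) (hlam : 0 < lam) (hK₁ : 0 ≤ K₁)
    (hw : ∀ j ∈ s, 0 ≤ w j) (hw₁ : ∑ j ∈ s, w j = 1) (hd : ∀ j ∈ s, d j ≤ K₁)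
    (hW₀ : ∀ t ≥ (0:ℝ), 0 ≤ W t)
    (hineq : ∀ t ≥ K₁, deriv W t ≤ -2 * lam * W t + lam * ∏ j ∈ s, W (t - d j) ^ w j)
    {K₀ : ℝ} (hWK : ∀ t ≥ (0:ℝ), W t ≤ K₀) (k : ℕ) :
    ∀ t ≥ k * (K₁ + log 2 / (2 * lam)), W t ≤ K₀ * (3 / 4) ^ k := by
  induction k with
  | zero => simpa using hWK
  | succ k ih =>
    intro t ht
    have hT : (0:ℝ) ≤ k * (K₁ + log 2 / (2 * lam)) := by
      have := log_nonneg one_le_two; positivity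
    have hstep := le_three_quarters_of_delay_ineq hW hlam hK₁ hw hw₁ hd hW₀ hineq hT ih t
      (by push_cast at ht; linarith)
    rw [pow_succ]; linarith

end DelayInequality

theorem decay_lemma
    (W : ℝ → ℝ) (K₀ K₁ lam : ℝ) (N : ℕ) (ν : ℕ → ℝ)
    (hlam : 0 < lam) (hK₁ : (2 * N : ℝ) ≤ K₁)
    (hν0 : ∀ j ≤ N, 0 ≤ ν j)
    (hνsum : (1 / 2) * ∑ j ∈ Finset.range (N + 1), ν j = 1)
    (hW : ContDiff ℝ 1 W)
    (hW0 : ∀ t ≥ (0:ℝ), 0 ≤ W t)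
    (hWK : ∀ t ≥ (0:ℝ), W t ≤ K₀)
    (hineq : ∀ t ≥ K₁, deriv W t ≤ -2 * lam * W t +
      lam * ∏ j ∈ Finset.range (N + 1), W (t - 2 * j) ^ (ν j / 2)) :
    ∃ C κ : ℝ, 0 < κ ∧ ∀ t ≥ (0:ℝ), W t ≤ C * Real.exp (-κ * t) := by
  have hK₀ : 0 ≤ K₀ := (hW0 0 le_rfl).trans (hWK 0 le_rfl)
  have hweights : ∑ j ∈ range (N + 1), ν j / 2 = 1 := by rw [← sum_div]; linarith
  have hdelays : ∀ j ∈ range (N + 1), 2 * (j : ℝ) ≤ K₁ := fun j hj => by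
    have : (j : ℝ) ≤ N := by exact_mod_cast mem_range_succ_iff.1 hj
    linarith
  have hK₁₀ : 0 ≤ K₁ := (by positivity : (0:ℝ) ≤ 2 * N).trans hK₁
  have hL : 0 < K₁ + log 2 / (2 * lam) := by
    have := log_pos one_lt_two; positivity
  exact exists_exp_decay_of_geometric hK₀ hL (by norm_num) (by norm_num)
    (le_geometric_of_delay_ineq (hW.differentiable one_ne_zero) hlam hK₁₀
      (fun j hj => div_nonneg (hν0 j (mem_range_succ_iff.1 hj)) zero_le_two) hweights hdelays
      hW0 hineq hWK)
end
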